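/- For n = 2, the determinant of the 2×2 matrix (a(i,j))_{1≤i,j≤2} equals ∏_{1≤i≤j≤k≤2} ((1-q^{i+j+k-1})/(1-q^{i+j+k-2}))^2, as an identity of rational functions in q. -/

import Mathlib

open Finset

/-- The indeterminate `q`, as a rational function. -/
noncomputable def qq : RatFunc ℚ := RatFunc.X

/-- The Gaussian binomial coefficient as a rational function in `q`. -/
noncomputable def qbinom (a b : ℕ) : RatFunc ℚ :=
  ∏ t ∈ Finset.range b, (1 - qq ^ (a - t)) / (1 - qq ^ (b - t))

/-- Okada's matrix entry `a(i,j)` (1-indexed). -/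
noncomputable def okadaEntry (i j : ℕ) : RatFunc ℚ :=
  qq ^ (i + j - 1) * (qbinom (i + j - 2) (i - 1) + qq * qbinom (i + j - 1) i)
    + (1 + qq ^ i) * (if i = j then 1 else 0) - (if i = j + 1 then 1 else 0)

/-- Triples (i,j,k) with 1 ≤ i ≤ j ≤ k ≤ n. -/
def tsppTriples (n : ℕ) : Finset (ℕ × ℕ × ℕ) :=
  ((Finset.Icc 1 n) ×ˢ (Finset.Icc 1 n) ×ˢ (Finset.Icc 1 n)).filter
    (fun t => t.1 ≤ t.2.1 ∧ t.2.1 ≤ t.2.2)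

/-- Okada's conjectured right-hand side. -/
noncomputable def okadaRHS (n : ℕ) : RatFunc ℚ :=
  ∏ t ∈ tsppTriples n,
    ((1 - qq ^ (t.1 + t.2.1 + t.2.2 - 1)) / (1 - qq ^ (t.1 + t.2.1 + t.2.2 - 2))) ^ 2


/-! The Gaussian binomials occurring in the four entries are `1`, `1 + q` and `1 + q + q²`, and
the product on the right telescopes to `((1 - q⁵) / (1 - q))² = (1 + q + q² + q³ + q⁴)²`, so the
identity reduces to a polynomial identity once the denominators `1 - qⁿ` are known to be nonzero. -/

lemma one_sub_qq_pow_ne_zero {n : ℕ} (hn : n ≠ 0) : (1 : RatFunc ℚ) - qq ^ n ≠ 0 := by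
  have hp : (1 - Polynomial.X ^ n : Polynomial ℚ) ≠ 0 := by
    intro h
    simpa [Polynomial.coeff_X_pow, Ne.symm hn] using congrArg (Polynomial.coeff · 0) h
  simpa [qq] using RatFunc.algebraMap_ne_zero hp

lemma one_sub_qq_ne_zero : (1 : RatFunc ℚ) - qq ≠ 0 := by
  simpa using one_sub_qq_pow_ne_zero one_ne_zero

lemma qbinom_zero (a : ℕ) : qbinom a 0 = 1 := by
  simp [qbinom]

lemma qbinom_self (b : ℕ) : qbinom b b = 1 :=
  prod_eq_one fun t ht => div_self (one_sub_qq_pow_ne_zero (by simp at ht; omega))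

lemma qbinom_one (a : ℕ) : qbinom a 1 = ∑ i ∈ range a, qq ^ i := by
  rw [geom_sum_eq (sub_ne_zero.mp one_sub_qq_ne_zero).symm, ← neg_div_neg_eq]
  simp [qbinom]

lemma qbinom_three_two : qbinom 3 2 = 1 + qq + qq ^ 2 := by
  have h1 := one_sub_qq_ne_zero
  have h2 := one_sub_qq_pow_ne_zero two_ne_zero
  simp only [qbinom, prod_range_succ, prod_range_zero, one_mul, Nat.reduceSub, pow_one]
  field_simp
  ring

lemma okadaEntry_one_one : okadaEntry 1 1 = (1 + qq) ^ 2 := by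
  simp [okadaEntry, qbinom_self]
  ring

lemma okadaEntry_one_two : okadaEntry 1 2 = qq ^ 2 * (1 + qq + qq ^ 2) := by
  norm_num [okadaEntry, qbinom_zero, qbinom_one, sum_range_succ, -mul_eq_mul_left_iff]
  ring

lemma okadaEntry_two_one : okadaEntry 2 1 = qq ^ 2 * (1 + qq) - 1 := by
  simp [okadaEntry, qbinom_self]

lemma okadaEntry_two_two :
    okadaEntry 2 2 = qq ^ 3 * (1 + 2 * qq + qq ^ 2 + qq ^ 3) + 1 + qq ^ 2 := by
  simp [okadaEntry, qbinom_one, qbinom_three_two, sum_range_succ]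
  ring

lemma tsppTriples_two : tsppTriples 2 = {(1, 1, 1), (1, 1, 2), (1, 2, 2), (2, 2, 2)} := by
  decide

lemma okadaRHS_two : okadaRHS 2 = (1 + qq + qq ^ 2 + qq ^ 3 + qq ^ 4) ^ 2 := by
  have h1 := one_sub_qq_ne_zero
  have h2 := one_sub_qq_pow_ne_zero two_ne_zero
  have h3 := one_sub_qq_pow_ne_zero three_ne_zero
  have h4 := one_sub_qq_pow_ne_zero four_ne_zero
  simp [okadaRHS, tsppTriples_two]
  field_simp
  ring

theorem okada_det_2 :
    Matrix.det (fun i j : Fin 2 => okadaEntry (i + 1) (j + 1)) = okadaRHS 2 := by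
  refine (Matrix.det_fin_two _).trans ?_
  show okadaEntry 1 1 * okadaEntry 2 2 - okadaEntry 1 2 * okadaEntry 2 1 = okadaRHS 2
  rw [okadaEntry_one_one, okadaEntry_one_two, okadaEntry_two_one, okadaEntry_two_two, okadaRHS_two]
  ring
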